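/- arXiv:2411.02111 — 2 statements merged into one kernel-verified Lean document; each statement's English description precedes it below -/
import Mathlib

section
/- (Euler's Formula for the Resistance Function I) Let G be a finite connected weighted graph, let s, t be vertices of G, and let B be the set of edges e_i of G such that s and t lie in different connected components of G−e_i (necessarily bridges). Then r(s,t) = Σ_{e_i ∈ B} L_i + Σ_{e_i not a bridge} (L_i/(L_i+R_i)²)·( j_{p_i}^{G−e_i}(q_i,s) − j_{p_i}^{G−e_i}(q_i,t) )² = Σ_{e_i ∈ B} L_i + Σ_{e_i not a bridge} (1/L_i)·( j_{p_i}(q_i,s) − j_{p_i}(q_i,t) )². -/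
open scoped Classical

/-- A finite weighted multigraph (resistive electrical network): finitely many
vertices and edges; each edge `e` has two endpoints `ends e` and a positive
length (resistance) `len e`.  Multiple edges and self-loops are allowed. -/
structure WMG where
  V : Type
  E : Type
  instV : Fintype V
  instE : Fintype E
  ends : E → V × V
  len : E → ℝ
  len_pos : ∀ e, 0 < len e

attribute [instance] WMG.instV WMG.instE

/-- The Moore–Penrose pseudoinverse of a real square matrix, characterized by
the four Penrose equations (it exists and is unique for real matrices). -/
noncomputable def Matrix.mpinv {n : Type} [Fintype n] (A : Matrix n n ℝ) : Matrix n n ℝ :=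
  if h : ∃ B : Matrix n n ℝ,
      A * B * A = A ∧ B * A * B = B ∧ Matrix.transpose (A * B) = A * B ∧ Matrix.transpose (B * A) = B * A
  then h.choose else 0

namespace WMG

/-- Indicator function. -/
noncomputable def ind {α : Type} (x y : α) : ℝ := if x = y then 1 else 0

/-- The weighted Laplacian: an edge `e` with endpoints `a, b` contributes
`(1/len e) * (δ_{ua} - δ_{ub}) * (δ_{va} - δ_{vb})` to the `(u,v)` entry.  So
the off-diagonal `(u,v)` entry is `-∑ 1/len e` over the edges joining `u` and
`v`, and all row sums are zero. -/
noncomputable def lap (G : WMG) : Matrix G.V G.V ℝ :=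
  ∑ e : G.E, (G.len e)⁻¹ •
    Matrix.of (fun u v : G.V =>
      (ind u (G.ends e).1 - ind u (G.ends e).2) *
      (ind v (G.ends e).1 - ind v (G.ends e).2))

/-- Effective resistance `r(p,q) = L⁺pp - 2·L⁺pq + L⁺qq`. -/
noncomputable def res (G : WMG) (p q : G.V) : ℝ :=
  G.lap.mpinv p p - 2 * G.lap.mpinv p q + G.lap.mpinv q q

/-- Voltage function `j_p(q,s) = L⁺pp - L⁺pq - L⁺ps + L⁺qs`. -/
noncomputable def volt (G : WMG) (p q s : G.V) : ℝ :=
  G.lap.mpinv p p - G.lap.mpinv p q - G.lap.mpinv p s + G.lap.mpinv q s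

/-- Two vertices are adjacent if some edge has them as its endpoints. -/
def Adj (G : WMG) (u v : G.V) : Prop :=
  ∃ e : G.E, G.ends e = (u, v) ∨ G.ends e = (v, u)

/-- `u` and `v` are joined by a walk in `G`. -/
def Reach (G : WMG) (u v : G.V) : Prop := Relation.ReflTransGen G.Adj u v

/-- `G` is connected. -/
def Connected (G : WMG) : Prop := Nonempty G.V ∧ ∀ u v : G.V, G.Reach u v

/-- Quotient graph: identify vertices along (the equivalence generated by) the
relation `r`; all edges are kept. -/
noncomputable def quot (G : WMG) (r : G.V → G.V → Prop) : WMG where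
  V := Quot r
  E := G.E
  instV := Fintype.ofFinite _
  instE := G.instE
  ends e := (Quot.mk r (G.ends e).1, Quot.mk r (G.ends e).2)
  len := G.len
  len_pos := G.len_pos

/-- The canonical map from the vertices of `G` to those of a quotient of `G`. -/
def quotMap (G : WMG) (r : G.V → G.V → Prop) : G.V → (G.quot r).V := Quot.mk r

/-- `G_{pq}`: identify the vertices `p` and `q`. -/
noncomputable def ident2 (G : WMG) (p q : G.V) : WMG :=
  G.quot (fun x y => x = p ∧ y = q)

def ident2Map (G : WMG) (p q : G.V) : G.V → (G.ident2 p q).V :=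
  G.quotMap _

/-- `G_{pqs}`: identify the vertices `p`, `q`, `s` into a single vertex. -/
noncomputable def ident3 (G : WMG) (p q s : G.V) : WMG :=
  G.quot (fun x y => (x = p ∧ y = q) ∨ (x = p ∧ y = s))

/-- `G_{pq,st}`: identify `p` with `q` and, separately, `s` with `t`. -/
noncomputable def ident22 (G : WMG) (p q s t : G.V) : WMG :=
  G.quot (fun x y => (x = p ∧ y = q) ∨ (x = s ∧ y = t))

/-- `G_S`: identify all vertices in the set `S` into a single vertex. -/
noncomputable def identSet (G : WMG) (S : Set G.V) : WMG :=
  G.quot (fun x y => x ∈ S ∧ y ∈ S)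

/-- `G − e`: delete the edge `e` (keeping all vertices). -/
noncomputable def delete (G : WMG) (e : G.E) : WMG where
  V := G.V
  E := {f : G.E // f ≠ e}
  instV := G.instV
  instE := Fintype.ofFinite _
  ends f := G.ends f.1
  len f := G.len f.1
  len_pos f := G.len_pos f.1

/-- `e` is a bridge if `G − e` is disconnected. -/
def IsBridge (G : WMG) (e : G.E) : Prop := ¬ (G.delete e).Connected

/-- `Ḡ_e`: contract the edge `e` (identify its endpoints and delete it). -/
noncomputable def contract (G : WMG) (e : G.E) : WMG :=
  (G.delete e).quot (fun x y => x = (G.ends e).1 ∧ y = (G.ends e).2)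

def contractMap (G : WMG) (e : G.E) : G.V → (G.contract e).V := Quot.mk _

/-- Replace the length of the edge `e` by `L'`. -/
noncomputable def setLen (G : WMG) (e : G.E) (L' : ℝ) (hL' : 0 < L') : WMG where
  V := G.V
  E := G.E
  instV := G.instV
  instE := G.instE
  ends := G.ends
  len f := if f = e then L' else G.len f
  len_pos f := by
    by_cases hf : f = e
    · simpa [hf] using hL'
    · simpa [hf] using G.len_pos f

/-- `T` is (the edge set of) a spanning tree of `G`: using only edges of `T`
any two vertices are joined, and `T` has (number of vertices) − 1 edges. -/
def IsSpanningTree (G : WMG) (T : Finset G.E) : Prop :=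
  (∀ u v : G.V, Relation.ReflTransGen
      (fun x y => ∃ e ∈ T, G.ends e = (x, y) ∨ G.ends e = (y, x)) u v) ∧
  T.card = Fintype.card G.V - 1

/-- `t G`: the number of spanning trees of `G` (equals `1` for a one-vertex
graph; self-loops contribute nothing). -/
noncomputable def t (G : WMG) : ℕ := Nat.card {T : Finset G.E // G.IsSpanningTree T}

/-- `t(G_{pq})`, with the convention `t(G_{pp}) = 0`. -/
noncomputable def t2 (G : WMG) (p q : G.V) : ℕ :=
  if p = q then 0 else (G.ident2 p q).t

/-- Disjoint union of two graphs. -/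
noncomputable def disjUnion (G₁ G₂ : WMG) : WMG where
  V := G₁.V ⊕ G₂.V
  E := G₁.E ⊕ G₂.E
  instV := inferInstance
  instE := inferInstance
  ends := Sum.elim (fun e => (Sum.inl (G₁.ends e).1, Sum.inl (G₁.ends e).2))
                   (fun e => (Sum.inr (G₂.ends e).1, Sum.inr (G₂.ends e).2))
  len := Sum.elim G₁.len G₂.len
  len_pos := by
    rintro (e | e)
    · exact G₁.len_pos e
    · exact G₂.len_pos e

/-- Glue `G₁` and `G₂` along two pairs of vertices (`p₁ ↔ p₂`, `q₁ ↔ q₂`):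
the result is the graph `G = G₁ ∪ G₂` with `G₁ ∩ G₂ = {p, q}` (the two pieces
share exactly these two vertices and no edges). -/
noncomputable def glue2 (G₁ G₂ : WMG) (p₁ q₁ : G₁.V) (p₂ q₂ : G₂.V) : WMG :=
  (G₁.disjUnion G₂).quot (fun x y =>
    (x = Sum.inl p₁ ∧ y = Sum.inr p₂) ∨ (x = Sum.inl q₁ ∧ y = Sum.inr q₂))

/-- Glue `G₁` and `G₂` along three pairs of vertices: the result is the graph
`G = G₁ ∪ G₂` with `G₁ ∩ G₂ = {p, q, s}`. -/
noncomputable def glue3 (G₁ G₂ : WMG) (p₁ q₁ s₁ : G₁.V) (p₂ q₂ s₂ : G₂.V) : WMG :=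
  (G₁.disjUnion G₂).quot (fun x y =>
    (x = Sum.inl p₁ ∧ y = Sum.inr p₂) ∨ (x = Sum.inl q₁ ∧ y = Sum.inr q₂) ∨
    (x = Sum.inl s₁ ∧ y = Sum.inr s₂))

/-- Disjoint union of a finite family of graphs. -/
noncomputable def sigmaGraph {k : ℕ} (G : Fin k → WMG) : WMG where
  V := Σ i, (G i).V
  E := Σ i, (G i).E
  instV := inferInstance
  instE := inferInstance
  ends e := (⟨e.1, ((G e.1).ends e.2).1⟩, ⟨e.1, ((G e.1).ends e.2).2⟩)
  len e := (G e.1).len e.2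
  len_pos e := (G e.1).len_pos e.2

/-- Glue the family `G i` along a common pair of vertices (all the `p i` are
identified together, and all the `q i` are identified together): the result is
`G = ⋃ G_i` with `G_i ∩ G_j = {p, q}` for all `i ≠ j`. -/
noncomputable def glueFam {k : ℕ} (G : Fin k → WMG) (p q : ∀ i, (G i).V) : WMG :=
  (sigmaGraph G).quot (fun x y =>
    (∃ i j, x = ⟨i, p i⟩ ∧ y = ⟨j, p j⟩) ∨ (∃ i j, x = ⟨i, q i⟩ ∧ y = ⟨j, q j⟩))

/-- The cyclic successor on `Fin k`. -/
def finSucc {k : ℕ} (i : Fin k) : Fin k :=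
  ⟨(i.1 + 1) % k, Nat.mod_lt _ (Nat.lt_of_le_of_lt (Nat.zero_le _) i.2)⟩

/-- `CG_k`: replace the `i`-th edge of the cycle `C_k` by the graph `G i`,
identifying `t i` (of `G i`) with `s (i+1)` (of `G (i+1)`), cyclically. -/
noncomputable def cycleGlue {k : ℕ} (G : Fin k → WMG) (s t : ∀ i, (G i).V) : WMG :=
  (sigmaGraph G).quot (fun x y =>
    ∃ i, x = ⟨i, t i⟩ ∧ y = ⟨finSucc i, s (finSucc i)⟩)

/-- Join a new vertex `u` (the vertex `none`) to the vertex `p i` of `H` by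
`a i` parallel unit edges, for each `i`.  The resulting graph `G` has `H = G − u`,
and if `p` is injective with all `a i ≥ 1` then `N_G(u) = {p 1, …, p n}` with
`a i` parallel edges joining `u` to `p i`. -/
noncomputable def cone (H : WMG) {n : ℕ} (p : Fin n → H.V) (a : Fin n → ℕ) : WMG where
  V := Option H.V
  E := H.E ⊕ (Σ i : Fin n, Fin (a i))
  instV := inferInstance
  instE := inferInstance
  ends := Sum.elim (fun e => (some (H.ends e).1, some (H.ends e).2))
                   (fun e => (none, some (p e.1)))
  len := Sum.elim H.len (fun _ => 1)
  len_pos := by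
    rintro (e | e)
    · exact H.len_pos e
    · exact one_pos

/-- The path graph `P_n` on `n` vertices `0, 1, …, n-1`, unit edge lengths. -/
noncomputable def path (n : ℕ) : WMG where
  V := Fin n
  E := Fin (n - 1)
  instV := inferInstance
  instE := inferInstance
  ends i := (⟨i.1, by have := i.2; omega⟩, ⟨i.1 + 1, by have := i.2; omega⟩)
  len _ := 1
  len_pos _ := one_pos

/-- The cycle graph `C_n` on `n` vertices, unit edge lengths. -/
noncomputable def cycle (n : ℕ) : WMG where
  V := Fin n
  E := Fin n
  instV := inferInstance
  instE := inferInstance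
  ends i := (i, finSucc i)
  len _ := 1
  len_pos _ := one_pos

/-- The modified fan graph `F̄an_n`: the path `P_n` together with one new hub
vertex joined to each path vertex by `a` parallel edges. -/
noncomputable def fanGraph (n a : ℕ) : WMG :=
  (path n).cone (fun i : Fin n => i) (fun _ => a)

/-- The modified wheel graph `W̄_n`: the cycle `C_n` together with one new hub
vertex joined to each cycle vertex by `a` parallel edges. -/
noncomputable def wheelGraph (n a : ℕ) : WMG :=
  (cycle n).cone (fun i : Fin n => i) (fun _ => a)

end WMG

/-- The Morgan–Voyce polynomial `B_m(x) = ∑_{k=0}^m C(m+k+1, m−k) x^k`. -/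
noncomputable def morganVoyce (m : ℕ) (x : ℝ) : ℝ :=
  ∑ k ∈ Finset.range (m + 1), (Nat.choose (m + k + 1) (m - k) : ℝ) * x ^ k

/-- The polynomial `W_m(x) = ∑_{k=0}^m ((2m+2)/(m+2+k)) C(m+2+k, m−k) x^k`. -/
noncomputable def wheelPoly (m : ℕ) (x : ℝ) : ℝ :=
  ∑ k ∈ Finset.range (m + 1),
    ((2 * m + 2 : ℝ) / (m + 2 + k : ℝ)) * (Nat.choose (m + 2 + k) (m - k) : ℝ) * x ^ k

/-- The Lucas numbers: `L₀ = 2`, `L₁ = 1`, `L_{m+2} = L_m + L_{m+1}`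
(so `L₂ = 3`). -/
def lucas : ℕ → ℕ
  | 0 => 2
  | 1 => 1
  | n + 2 => lucas n + lucas (n + 1)

/-!
Let `x = L⁺ (δ_s - δ_t)` be the potential of a unit current from `s` to `t`; for connected `G`,
`L⁺ = (L + J)⁻¹ - J` with `J = 𝟙𝟙ᵀ / |V|`. Then `r(s,t) = x_s - x_t = xᵀ L x`, which is the
energy `∑_e (x_p - x_q)² / L_e`. Summing the current out of a component of `G - e` shows that an
edge separating `s` from `t` carries the whole unit current, so its term is `L_e`, while any
other bridge carries none. For a non-bridge `e`, `L_{G-e} = L_G - b bᵀ / L_e` with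
`b = δ_p - δ_q`, and a Sherman–Morrison computation gives
`(x_p - x_q) (L_e + R_e) = L_e (y_p - y_q)` for the potential `y` of `G - e`. Finally
`j_p(q,s) - j_p(q,t) = x_q - x_p`.
-/

open scoped Matrix

namespace Matrix

variable {n : Type} [Fintype n]

theorem mpinv_eq_of_penrose {A B : Matrix n n ℝ} (h₁ : A * B * A = A) (h₂ : B * A * B = B)
    (h₃ : (A * B)ᵀ = A * B) (h₄ : (B * A)ᵀ = B * A) : A.mpinv = B := by
  have hex : ∃ C : Matrix n n ℝ,
      A * C * A = A ∧ C * A * C = C ∧ (A * C)ᵀ = A * C ∧ (C * A)ᵀ = C * A :=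
    ⟨B, h₁, h₂, h₃, h₄⟩
  rw [mpinv, dif_pos hex]
  obtain ⟨c₁, c₂, c₃, c₄⟩ := hex.choose_spec
  set C := hex.choose
  have hAC : A * C = A * B := by
    calc A * C = (A * B * A) * C := by rw [h₁]
      _ = (A * B)ᵀ * (A * C)ᵀ := by rw [h₃, c₃, Matrix.mul_assoc, Matrix.mul_assoc]
      _ = (A * C * A * B)ᵀ := by simp only [transpose_mul, Matrix.mul_assoc]
      _ = A * B := by rw [c₁, h₃]
  have hCA : C * A = B * A := by
    calc C * A = C * (A * B * A) := by rw [h₁]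
      _ = (C * A)ᵀ * (B * A)ᵀ := by rw [c₄, h₄, Matrix.mul_assoc, Matrix.mul_assoc]
      _ = (B * (A * C * A))ᵀ := by simp only [transpose_mul, Matrix.mul_assoc]
      _ = B * A := by rw [c₁, h₄]
  calc C = C * A * C := c₂.symm
    _ = B * A * B := by rw [hCA, Matrix.mul_assoc, hAC, ← Matrix.mul_assoc]
    _ = B := h₂

variable [DecidableEq n] {A P : Matrix n n ℝ}

theorem inv_add_mul_of_mul_eq_zero (hAP : A * P = 0) (hPP : P * P = P)
    (hdet : IsUnit (A + P).det) : (A + P)⁻¹ * P = P := by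
  calc (A + P)⁻¹ * P = (A + P)⁻¹ * ((A + P) * P) := by rw [Matrix.add_mul, hAP, hPP, zero_add]
    _ = P := nonsing_inv_mul_cancel_left _ _ hdet

theorem mul_inv_add_of_mul_eq_zero (hPA : P * A = 0) (hPP : P * P = P)
    (hdet : IsUnit (A + P).det) : P * (A + P)⁻¹ = P := by
  calc P * (A + P)⁻¹ = P * (A + P) * (A + P)⁻¹ := by rw [Matrix.mul_add, hPA, hPP, zero_add]
    _ = P := mul_nonsing_inv_cancel_right _ _ hdet

theorem mul_inv_add_sub (hAP : A * P = 0) (hPA : P * A = 0) (hPP : P * P = P)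
    (hdet : IsUnit (A + P).det) : A * ((A + P)⁻¹ - P) = 1 - P := by
  calc A * ((A + P)⁻¹ - P) = (A + P - P) * (A + P)⁻¹ - A * P := by
        rw [add_sub_cancel_right, Matrix.mul_sub]
    _ = 1 - P := by
        rw [Matrix.sub_mul, mul_nonsing_inv _ hdet, mul_inv_add_of_mul_eq_zero hPA hPP hdet, hAP,
          sub_zero]

theorem inv_add_sub_mul (hAP : A * P = 0) (hPA : P * A = 0) (hPP : P * P = P)
    (hdet : IsUnit (A + P).det) : ((A + P)⁻¹ - P) * A = 1 - P := by
  calc ((A + P)⁻¹ - P) * A = (A + P)⁻¹ * (A + P - P) - P * A := by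
        rw [add_sub_cancel_right, Matrix.sub_mul]
    _ = 1 - P := by
        rw [Matrix.mul_sub, nonsing_inv_mul _ hdet, inv_add_mul_of_mul_eq_zero hAP hPP hdet, hPA,
          sub_zero]

theorem mpinv_eq_inv_add_sub (hAP : A * P = 0) (hPA : P * A = 0) (hPP : P * P = P)
    (hPt : Pᵀ = P) (hdet : IsUnit (A + P).det) : A.mpinv = (A + P)⁻¹ - P := by
  have hAB := mul_inv_add_sub hAP hPA hPP hdet
  have hBA := inv_add_sub_mul hAP hPA hPP hdet
  have hsymm : (1 - P)ᵀ = 1 - P := by rw [transpose_sub, transpose_one, hPt]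
  refine mpinv_eq_of_penrose ?_ ?_ (by rw [hAB, hsymm]) (by rw [hBA, hsymm])
  · rw [hAB, Matrix.sub_mul, Matrix.one_mul, hPA, sub_zero]
  · rw [Matrix.mul_assoc, hAB, Matrix.mul_sub, Matrix.mul_one, Matrix.sub_mul,
      inv_add_mul_of_mul_eq_zero hAP hPP hdet, hPP, sub_self, sub_zero]

theorem sherman_morrison_dotProduct {L L' B : Matrix n n ℝ} {b x d : n → ℝ} {c : ℝ}
    (hc : c ≠ 0) (hL' : L' = L - c⁻¹ • vecMulVec b b) (hx : L *ᵥ x = d)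
    (hBL' : B * L' = 1 - P) (hP : b ⬝ᵥ (P *ᵥ x) = 0) :
    (b ⬝ᵥ x) * (c + b ⬝ᵥ (B *ᵥ b)) = c * (b ⬝ᵥ (B *ᵥ d)) := by
  have hBL'x : B *ᵥ (L' *ᵥ x) = x - P *ᵥ x := by
    rw [mulVec_mulVec, hBL', sub_mulVec, one_mulVec]
  rw [hL', sub_mulVec, smul_mulVec, vecMulVec_mulVec, op_smul_eq_smul, hx, smul_smul, mulVec_sub,
    mulVec_smul] at hBL'x
  have h := congrArg (b ⬝ᵥ ·) hBL'x
  simp only [dotProduct_sub, dotProduct_smul, hP, smul_eq_mul, sub_zero] at h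
  field_simp at h
  linear_combination -h

end Matrix

namespace WMG

noncomputable def dipole {α : Type} (a b : α) : α → ℝ := fun v => ind v a - ind v b

section Dipole

variable {α : Type} [Fintype α]

theorem dotProduct_dipole (x : α → ℝ) (a b : α) : x ⬝ᵥ dipole a b = x a - x b := by
  simp [dipole, ind, dotProduct, mul_sub, Finset.sum_sub_distrib]

theorem dipole_dotProduct (a b : α) (x : α → ℝ) : dipole a b ⬝ᵥ x = x a - x b := by
  rw [dotProduct_comm, dotProduct_dipole]

theorem mulVec_dipole (A : Matrix α α ℝ) (a b v : α) : (A *ᵥ dipole a b) v = A v a - A v b :=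
  dotProduct_dipole (A v) a b

end Dipole

section Laplacian

variable (G : WMG)

theorem lap_eq_sum : G.lap = ∑ e, (G.len e)⁻¹ •
    Matrix.vecMulVec (dipole (G.ends e).1 (G.ends e).2) (dipole (G.ends e).1 (G.ends e).2) :=
  rfl

theorem lap_transpose : G.lapᵀ = G.lap := by
  simp [lap_eq_sum, Matrix.transpose_sum, Matrix.transpose_vecMulVec]

theorem lap_mulVec (x : G.V → ℝ) : G.lap *ᵥ x = ∑ e, ((G.len e)⁻¹ *
    (x (G.ends e).1 - x (G.ends e).2)) • dipole (G.ends e).1 (G.ends e).2 := by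
  rw [lap_eq_sum, Matrix.sum_mulVec]
  refine Finset.sum_congr rfl fun e _ => ?_
  rw [Matrix.smul_mulVec, Matrix.vecMulVec_mulVec, op_smul_eq_smul, dipole_dotProduct, smul_smul]

theorem dotProduct_lap_mulVec (y x : G.V → ℝ) : y ⬝ᵥ (G.lap *ᵥ x) = ∑ e, (G.len e)⁻¹ *
    ((y (G.ends e).1 - y (G.ends e).2) * (x (G.ends e).1 - x (G.ends e).2)) := by
  simp [lap_mulVec, dotProduct_sum, dotProduct_smul, dotProduct_dipole, mul_comm, mul_assoc]

theorem dotProduct_lap_mulVec_self (x : G.V → ℝ) : x ⬝ᵥ (G.lap *ᵥ x) =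
    ∑ e, (G.len e)⁻¹ * (x (G.ends e).1 - x (G.ends e).2) ^ 2 := by
  simp only [dotProduct_lap_mulVec, sq]

theorem lap_mulVec_one : G.lap *ᵥ 1 = 0 := by
  simp [lap_mulVec]

theorem lap_delete (e : G.E) : (G.delete e).lap = G.lap - (G.len e)⁻¹ •
    Matrix.vecMulVec (dipole (G.ends e).1 (G.ends e).2) (dipole (G.ends e).1 (G.ends e).2) := by
  have h := Fintype.sum_eq_add_sum_subtype_ne (fun f => (G.len f)⁻¹ •
    Matrix.vecMulVec (dipole (G.ends f).1 (G.ends f).2) (dipole (G.ends f).1 (G.ends f).2)) e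
  rw [← lap_eq_sum] at h
  rw [h, add_sub_cancel_left, lap_eq_sum]
  -- the edge type of `G.delete e` carries its own `Fintype` instance
  exact Finset.sum_congr (by congr; exact Subsingleton.elim _ _) fun _ _ => rfl

noncomputable def avg : Matrix G.V G.V ℝ := (Fintype.card G.V : ℝ)⁻¹ • Matrix.vecMulVec 1 1

theorem avg_mulVec_apply (x : G.V → ℝ) (v : G.V) :
    (G.avg *ᵥ x) v = (Fintype.card G.V : ℝ)⁻¹ * ∑ u, x u := by
  rw [avg, Matrix.smul_mulVec, Matrix.vecMulVec_mulVec, op_smul_eq_smul, one_dotProduct]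
  simp

theorem dipole_dotProduct_avg_mulVec (a b : G.V) (x : G.V → ℝ) :
    dipole a b ⬝ᵥ (G.avg *ᵥ x) = 0 := by
  rw [dipole_dotProduct, avg_mulVec_apply, avg_mulVec_apply, sub_self]

theorem avg_transpose : G.avgᵀ = G.avg := by
  rw [avg, Matrix.transpose_smul, Matrix.transpose_vecMulVec]

theorem lap_mul_avg : G.lap * G.avg = 0 := by
  rw [avg, Matrix.mul_smul, Matrix.mul_vecMulVec, lap_mulVec_one, Matrix.zero_vecMulVec, smul_zero]

theorem avg_mul_lap : G.avg * G.lap = 0 := by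
  rw [← G.avg_transpose, ← G.lap_transpose, ← Matrix.transpose_mul, lap_mul_avg,
    Matrix.transpose_zero]

theorem avg_mul_avg [Nonempty G.V] : G.avg * G.avg = G.avg := by
  rw [avg, Matrix.smul_mul, Matrix.mul_smul, Matrix.vecMulVec_mul_vecMulVec, dotProduct_one,
    Matrix.vecMulVec_smul, smul_smul, smul_smul]
  congr 1
  simp

theorem avg_mulVec_one [Nonempty G.V] : G.avg *ᵥ 1 = 1 := by
  ext v
  rw [avg_mulVec_apply]
  simp

end Laplacian

variable {G : WMG}

theorem Connected.eq_of_lap_mulVec_eq_zero (hG : G.Connected) {x : G.V → ℝ}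
    (hx : G.lap *ᵥ x = 0) (u v : G.V) : x u = x v := by
  have hterm : ∀ e ∈ Finset.univ, 0 ≤ (G.len e)⁻¹ * (x (G.ends e).1 - x (G.ends e).2) ^ 2 :=
    fun e _ => by have := G.len_pos e; positivity
  have hsum := G.dotProduct_lap_mulVec_self x
  rw [hx, dotProduct_zero, eq_comm, Finset.sum_eq_zero_iff_of_nonneg hterm] at hsum
  have hedge : ∀ e, x (G.ends e).1 = x (G.ends e).2 := fun e => by
    have := hsum e (Finset.mem_univ e)
    rw [mul_eq_zero, inv_eq_zero, pow_eq_zero_iff two_ne_zero, sub_eq_zero] at this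
    exact this.resolve_left (G.len_pos e).ne'
  induction hG.2 u v with
  | refl => rfl
  | tail _ hadj ih =>
    obtain ⟨e, he | he⟩ := hadj <;> have := hedge e <;> simp only [he] at this
    exacts [ih.trans this, ih.trans this.symm]

theorem Connected.isUnit_det_lap_add_avg (hG : G.Connected) : IsUnit (G.lap + G.avg).det := by
  have : Nonempty G.V := hG.1
  rw [isUnit_iff_ne_zero, Ne, ← Matrix.exists_mulVec_eq_zero_iff]
  rintro ⟨v, hv, hMv⟩
  have hJv : G.avg *ᵥ v = 0 := by
    rw [← Matrix.mulVec_zero G.avg, ← hMv, Matrix.mulVec_mulVec, Matrix.mul_add, avg_mul_lap,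
      avg_mul_avg, zero_add]
  have hLv : G.lap *ᵥ v = 0 := by rwa [Matrix.add_mulVec, hJv, add_zero] at hMv
  obtain ⟨u₀⟩ := hG.1
  have hconst : v = v u₀ • 1 := funext fun u => by
    simp [hG.eq_of_lap_mulVec_eq_zero hLv u u₀]
  rw [hconst, Matrix.mulVec_smul, avg_mulVec_one, ← hconst] at hJv
  exact hv hJv

theorem Connected.lap_mpinv_eq (hG : G.Connected) :
    G.lap.mpinv = (G.lap + G.avg)⁻¹ - G.avg :=
  have : Nonempty G.V := hG.1
  Matrix.mpinv_eq_inv_add_sub G.lap_mul_avg G.avg_mul_lap G.avg_mul_avg G.avg_transpose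
    hG.isUnit_det_lap_add_avg

theorem Connected.lap_mul_lap_mpinv (hG : G.Connected) : G.lap * G.lap.mpinv = 1 - G.avg :=
  have : Nonempty G.V := hG.1
  hG.lap_mpinv_eq ▸ Matrix.mul_inv_add_sub G.lap_mul_avg G.avg_mul_lap G.avg_mul_avg
    hG.isUnit_det_lap_add_avg

theorem Connected.lap_mpinv_mul_lap (hG : G.Connected) : G.lap.mpinv * G.lap = 1 - G.avg :=
  have : Nonempty G.V := hG.1
  hG.lap_mpinv_eq ▸ Matrix.inv_add_sub_mul G.lap_mul_avg G.avg_mul_lap G.avg_mul_avg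
    hG.isUnit_det_lap_add_avg

theorem Connected.lap_mpinv_apply_comm (hG : G.Connected) (u v : G.V) :
    G.lap.mpinv u v = G.lap.mpinv v u := by
  have hsymm : G.lap.mpinvᵀ = G.lap.mpinv := by
    rw [hG.lap_mpinv_eq, Matrix.transpose_sub, Matrix.transpose_nonsing_inv, Matrix.transpose_add,
      lap_transpose, avg_transpose]
  exact congrFun (congrFun hsymm v) u

noncomputable def potential (G : WMG) (s t : G.V) : G.V → ℝ := G.lap.mpinv *ᵥ dipole s t

theorem potential_apply (s t v : G.V) : G.potential s t v = G.lap.mpinv v s - G.lap.mpinv v t :=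
  mulVec_dipole _ s t v

theorem volt_sub_volt (p q s t : G.V) :
    G.volt p q s - G.volt p q t = G.potential s t q - G.potential s t p := by
  rw [volt, volt, potential_apply, potential_apply]
  ring

theorem Connected.lap_mulVec_potential (hG : G.Connected) (s t : G.V) :
    G.lap *ᵥ G.potential s t = dipole s t := by
  have hmean : G.avg *ᵥ dipole s t = 0 := funext fun v => by
    rw [avg_mulVec_apply, ← one_dotProduct, dotProduct_dipole]
    simp
  rw [potential, Matrix.mulVec_mulVec, hG.lap_mul_lap_mpinv, Matrix.sub_mulVec,
    Matrix.one_mulVec, hmean, sub_zero]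

theorem Connected.res_eq_potential_sub (hG : G.Connected) (s t : G.V) :
    G.res s t = G.potential s t s - G.potential s t t := by
  rw [res, potential_apply, potential_apply, hG.lap_mpinv_apply_comm t s]
  ring

theorem Connected.res_eq_sum (hG : G.Connected) (s t : G.V) :
    G.res s t = ∑ e, (G.len e)⁻¹ *
      (G.potential s t (G.ends e).1 - G.potential s t (G.ends e).2) ^ 2 := by
  rw [← dotProduct_lap_mulVec_self, hG.lap_mulVec_potential, dotProduct_dipole,
    hG.res_eq_potential_sub]

theorem Connected.res_nonneg (hG : G.Connected) (s t : G.V) : 0 ≤ G.res s t := by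
  rw [hG.res_eq_sum]
  exact Finset.sum_nonneg fun e _ => by have := G.len_pos e; positivity

theorem Reach.symm {u v : G.V} (h : G.Reach u v) : G.Reach v u := by
  induction h with
  | refl => exact Relation.ReflTransGen.refl
  | tail _ hadj ih =>
    obtain ⟨e, he⟩ := hadj
    exact Relation.ReflTransGen.head ⟨e, he.symm⟩ ih

theorem IsBridge.of_not_reach {e : G.E} {s t : G.V} (hst : ¬ (G.delete e).Reach s t) :
    G.IsBridge e :=
  fun hc => hst (hc.2 s t)

theorem Connected.not_isBridge_of_reach (hG : G.Connected) {e : G.E}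
    (hpq : (G.delete e).Reach (G.ends e).1 (G.ends e).2) : ¬ G.IsBridge e := by
  have hadj : G.Adj ≤ (G.delete e).Reach := by
    rintro u v ⟨f, hf⟩
    by_cases hfe : f = e
    · subst hfe
      rcases hf with hf | hf <;> rw [hf] at hpq
      exacts [hpq, hpq.symm]
    · exact Relation.ReflTransGen.single ⟨⟨f, hfe⟩, hf⟩
  exact not_not.mpr ⟨hG.1, fun u v => Relation.reflTransGen_closed hadj _ _ (hG.2 u v)⟩

noncomputable def sideInd (G : WMG) (e : G.E) (a v : G.V) : ℝ :=
  if (G.delete e).Reach a v then 1 else 0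

theorem sideInd_self (e : G.E) (a : G.V) : G.sideInd e a a = 1 :=
  if_pos Relation.ReflTransGen.refl

theorem sideInd_of_not_reach {e : G.E} {a v : G.V} (h : ¬ (G.delete e).Reach a v) :
    G.sideInd e a v = 0 :=
  if_neg h

theorem sideInd_eq_zero_or_eq_one (e : G.E) (a v : G.V) :
    G.sideInd e a v = 0 ∨ G.sideInd e a v = 1 := by
  unfold sideInd
  split_ifs <;> simp

theorem sideInd_eq_of_reach {e : G.E} {u v : G.V} (h : (G.delete e).Reach u v) (a : G.V) :
    G.sideInd e a u = G.sideInd e a v := by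
  have : (G.delete e).Reach a u ↔ (G.delete e).Reach a v :=
    ⟨fun h' => h'.trans h, fun h' => h'.trans h.symm⟩
  simp only [sideInd, this]

theorem sideInd_ends_of_ne {e f : G.E} (hf : f ≠ e) (a : G.V) :
    G.sideInd e a (G.ends f).1 = G.sideInd e a (G.ends f).2 :=
  sideInd_eq_of_reach (Relation.ReflTransGen.single ⟨⟨f, hf⟩, Or.inl rfl⟩) a

theorem dotProduct_lap_mulVec_of_forall_ne (e : G.E) {y : G.V → ℝ}
    (hy : ∀ f, f ≠ e → y (G.ends f).1 = y (G.ends f).2) (x : G.V → ℝ) :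
    y ⬝ᵥ (G.lap *ᵥ x) = (G.len e)⁻¹ *
      ((y (G.ends e).1 - y (G.ends e).2) * (x (G.ends e).1 - x (G.ends e).2)) := by
  rw [dotProduct_lap_mulVec]
  exact Fintype.sum_eq_single e fun f hf => by rw [hy f hf, sub_self, zero_mul, mul_zero]

/-- Conservation of the unit current from `s` to `t` on the component of `a` in `G - e`: only `e`
leaves that component. -/
theorem Connected.sideInd_sub_eq (hG : G.Connected) (e : G.E) (a s t : G.V) :
    G.sideInd e a s - G.sideInd e a t = (G.len e)⁻¹ *
      ((G.sideInd e a (G.ends e).1 - G.sideInd e a (G.ends e).2) *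
        (G.potential s t (G.ends e).1 - G.potential s t (G.ends e).2)) := by
  have h := dotProduct_lap_mulVec_of_forall_ne e (fun f hf => sideInd_ends_of_ne hf a)
    (G.potential s t)
  rw [hG.lap_mulVec_potential] at h
  exact (dotProduct_dipole _ s t).symm.trans h

theorem Connected.sq_potential_sub_of_not_reach (hG : G.Connected) {e : G.E} {s t : G.V}
    (hst : ¬ (G.delete e).Reach s t) :
    (G.len e)⁻¹ * (G.potential s t (G.ends e).1 - G.potential s t (G.ends e).2) ^ 2 = G.len e := by
  have h := hG.sideInd_sub_eq e s s t
  rw [sideInd_self, sideInd_of_not_reach hst, sub_zero] at h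
  set d := G.sideInd e s (G.ends e).1 - G.sideInd e s (G.ends e).2
  have hd : d ^ 2 = 1 := by
    rcases sideInd_eq_zero_or_eq_one e s (G.ends e).1 with hp | hp <;>
      rcases sideInd_eq_zero_or_eq_one e s (G.ends e).2 with hq | hq <;>
      simp only [d, hp, hq] at h ⊢ <;> norm_num at h <;> norm_num
  set Δ := G.potential s t (G.ends e).1 - G.potential s t (G.ends e).2
  have hL := (G.len_pos e).ne'
  field_simp at h ⊢
  linear_combination (-Δ ^ 2) * hd - (G.len e + d * Δ) * h

theorem Connected.potential_ends_eq_of_isBridge (hG : G.Connected) {e : G.E} (hb : G.IsBridge e)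
    {s t : G.V} (hst : (G.delete e).Reach s t) :
    G.potential s t (G.ends e).1 = G.potential s t (G.ends e).2 := by
  have h := hG.sideInd_sub_eq e (G.ends e).1 s t
  have hq : ¬ (G.delete e).Reach (G.ends e).1 (G.ends e).2 := fun hpq =>
    hG.not_isBridge_of_reach hpq hb
  rw [sideInd_self, sideInd_of_not_reach hq, sideInd_eq_of_reach hst, sub_self, sub_zero, one_mul,
    eq_comm, mul_eq_zero, inv_eq_zero, sub_eq_zero] at h
  exact h.resolve_left (G.len_pos e).ne'

theorem Connected.res_eq_sum_separating_add_sum_not_isBridge (hG : G.Connected) (s t : G.V) :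
    G.res s t =
      (∑ e ∈ Finset.univ.filter (fun e : G.E => ¬ (G.delete e).Reach s t), G.len e) +
      ∑ e ∈ Finset.univ.filter (fun e : G.E => ¬ G.IsBridge e), (G.len e)⁻¹ *
        (G.potential s t (G.ends e).1 - G.potential s t (G.ends e).2) ^ 2 := by
  rw [hG.res_eq_sum, Finset.sum_filter, Finset.sum_filter, ← Finset.sum_add_distrib]
  refine Finset.sum_congr rfl fun e _ => ?_
  by_cases hst : (G.delete e).Reach s t
  · by_cases hb : G.IsBridge e
    · simp [hst, hb, hG.potential_ends_eq_of_isBridge hb hst]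
    · simp [hst, hb]
  · simp [hst, IsBridge.of_not_reach hst, hG.sq_potential_sub_of_not_reach hst]

theorem Connected.potential_sub_mul_add_res_delete (hG : G.Connected) {e : G.E}
    (he : ¬ G.IsBridge e) (s t : G.V) :
    (G.potential s t (G.ends e).1 - G.potential s t (G.ends e).2) *
        (G.len e + (G.delete e).res (G.ends e).1 (G.ends e).2) =
      G.len e * ((G.delete e).potential s t (G.ends e).1 -
        (G.delete e).potential s t (G.ends e).2) := by
  have hH : (G.delete e).Connected := not_not.mp he
  have h := Matrix.sherman_morrison_dotProduct (G.len_pos e).ne' (G.lap_delete e)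
    (hG.lap_mulVec_potential s t) hH.lap_mpinv_mul_lap
    ((G.delete e).dipole_dotProduct_avg_mulVec _ _ _)
  -- `convert` bridges the vertex types `G.V` and `(G.delete e).V`, which agree only up to unfolding
  convert h using 3
  · exact (dipole_dotProduct _ _ _).symm
  · exact (hH.res_eq_potential_sub _ _).trans (dipole_dotProduct _ _ _).symm
  · exact (dipole_dotProduct _ _ _).symm

end WMG

/-- **Euler's Formula for the Resistance Function I.**  For vertices `s, t` of
a finite connected weighted graph `G`, with `B` the set of edges whose removal
disconnects `s` from `t`:
`r(s,t) = ∑_{e ∈ B} L_e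
        + ∑_{e not a bridge} (L_e/(L_e+R_e)²) (j^{G-e}_{p_e}(q_e,s) - j^{G-e}_{p_e}(q_e,t))²
        = ∑_{e ∈ B} L_e
        + ∑_{e not a bridge} (1/L_e) (j_{p_e}(q_e,s) - j_{p_e}(q_e,t))²`. -/
theorem euler_formula_resistance_I (G : WMG) (hG : G.Connected) (s t : G.V) :
    (G.res s t =
      (∑ e ∈ Finset.univ.filter (fun e : G.E => ¬ (G.delete e).Reach s t), G.len e) +
      ∑ e ∈ Finset.univ.filter (fun e : G.E => ¬ G.IsBridge e),
        (G.len e / (G.len e + (G.delete e).res (G.ends e).1 (G.ends e).2) ^ 2) *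
          ((G.delete e).volt (G.ends e).1 (G.ends e).2 s -
           (G.delete e).volt (G.ends e).1 (G.ends e).2 t) ^ 2) ∧
    (G.res s t =
      (∑ e ∈ Finset.univ.filter (fun e : G.E => ¬ (G.delete e).Reach s t), G.len e) +
      ∑ e ∈ Finset.univ.filter (fun e : G.E => ¬ G.IsBridge e),
        (1 / G.len e) *
          (G.volt (G.ends e).1 (G.ends e).2 s -
           G.volt (G.ends e).1 (G.ends e).2 t) ^ 2) := by
  have hsplit := hG.res_eq_sum_separating_add_sum_not_isBridge s t
  refine ⟨hsplit.trans ?_, hsplit.trans ?_⟩ <;> congr 1 <;>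
    refine Finset.sum_congr rfl fun e he => ?_
  · have hnb := (Finset.mem_filter.mp he).2
    have hR := (not_not.mp hnb : (G.delete e).Connected).res_nonneg (G.ends e).1 (G.ends e).2
    have hL := G.len_pos e
    have hSM := hG.potential_sub_mul_add_res_delete hnb s t
    rw [WMG.volt_sub_volt (G := G.delete e) (G.ends e).1 (G.ends e).2 s t]
    set Δx := G.potential s t (G.ends e).1 - G.potential s t (G.ends e).2
    set Δy := (G.delete e).potential s t (G.ends e).1 - (G.delete e).potential s t (G.ends e).2
    set R := (G.delete e).res (G.ends e).1 (G.ends e).2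
    field_simp
    linear_combination (Δx * (G.len e + R) + G.len e * Δy) * hSM
  · rw [WMG.volt_sub_volt, one_div]
    ring
end

section
/- Let G = ⋃_{i=1}^{k} G_i be a connected multigraph which is the union of k subgraphs with G_i ∩ G_j = {p, q} for every pair of distinct indices i, j. Then t(G) = ( ∏_{j=1}^{k} t(G_{j,pq}) ) · Σ_{i=1}^{k} t(G_i)/t(G_{i,pq}), where G_{j,pq} is obtained from G_j by identifying p and q. In particular, if every G_i is a copy of the same graph G₁ (glued along the same two vertices p, q), then t(G) = k·t(G₁)·t(G_{1,pq})^{k−1}. -/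
open scoped Classical

/-! A spanning tree `T` of the glued graph restricts to an edge set `T_j` of every piece `G_j`.
A walk leaves `G_j` only through `p` or `q`, so each `T_j` connects `G_{j,pq}`. Some `T_i` even
joins `p` to `q` inside `G_i` (hence connects `G_i`): otherwise the vertices joined to `q` inside
their own piece would form a union of components of `(V, T)` containing `q` but not `p`.
As `|V(G)| = Σ_j |V(G_j)| - 2k + 2` and `|T| = Σ_j |T_j|`, the lower bounds
`|T_i| ≥ |V(G_i)| - 1` and `|T_j| ≥ |V(G_{j,pq})| - 1` must all be equalities: `T_i` is a spanning
tree of `G_i` and every other `T_j` one of `G_{j,pq}`. Conversely such a family glues to a spanning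
tree, and `i` is unique because `G_i` and `G_{i,pq}` have different numbers of vertices. Hence
`t(G) = Σ_i t(G_i) ∏_{j ≠ i} t(G_{j,pq})`. -/

open Relation Finset

theorem Relation.EqvGen.lift' {α β : Type*} {r : α → α → Prop} {s : β → β → Prop} (f : α → β)
    (h : ∀ a b, r a b → EqvGen s (f a) (f b)) {a b : α} (hab : EqvGen r a b) :
    EqvGen s (f a) (f b) := by
  induction hab with
  | rel x y hxy => exact h x y hxy
  | refl x => exact .refl _
  | symm x y _ ih => exact ih.symm
  | trans x y z _ _ ih₁ ih₂ => exact ih₁.trans _ _ _ ih₂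

theorem Fintype.card_ne_and_ne_add_two {α : Type*} [Fintype α] {a b : α} (hab : a ≠ b) :
    Fintype.card {x // x ≠ a ∧ x ≠ b} + 2 = Fintype.card α := by
  have h : (univ.filter fun x => x ≠ a ∧ x ≠ b) = univ \ {a, b} := by ext; simp
  have h2 := card_le_univ ({a, b} : Finset α)
  rw [Fintype.card_subtype, h, card_univ_sdiff, card_pair hab] at *
  omega

noncomputable def Finset.sigmaEquivPi {ι : Type*} [Fintype ι] (β : ι → Type*) :
    Finset (Σ i, β i) ≃ ∀ i, Finset (β i) where
  toFun T i := T.preimage (Sigma.mk i) sigma_mk_injective.injOn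
  invFun S := univ.sigma S
  left_inv T := T.sigma_preimage_mk_of_subset (subset_univ _)
  right_inv S := by ext i e; simp

namespace WMG

section

variable {G : WMG} {T : Finset G.E}

def Joins (G : WMG) (T : Finset G.E) (x y : G.V) : Prop :=
  ∃ e ∈ T, G.ends e = (x, y) ∨ G.ends e = (y, x)

instance (G : WMG) (T : Finset G.E) : Std.Symm (G.Joins T) :=
  ⟨fun _ _ ⟨e, he, h⟩ => ⟨e, he, h.symm⟩⟩

def Spans (G : WMG) (T : Finset G.E) : Prop := ∀ u v, EqvGen (G.Joins T) u v

theorem isSpanningTree_iff [Nonempty G.V] :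
    G.IsSpanningTree T ↔ G.Spans T ∧ T.card + 1 = Nat.card G.V := by
  have := Fintype.card_pos (α := G.V)
  rw [Spans, EqvGen.eqvGen_eq_reflTransGen, Nat.card_eq_fintype_card]
  exact and_congr Iff.rfl (by omega)

def simpleGraph (G : WMG) (T : Finset G.E) : SimpleGraph G.V :=
  .fromEdgeSet ↑(T.image fun e => s((G.ends e).1, (G.ends e).2))

theorem reachable_simpleGraph : (G.simpleGraph T).Reachable = EqvGen (G.Joins T) := by
  rw [simpleGraph, SimpleGraph.reachable_fromEdgeSet_eq_reflTransGen_toRel,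
    EqvGen.eqvGen_eq_reflTransGen]
  congr 1
  ext x y
  simp [Sym2.toRel_prop, Joins, Prod.ext_iff]

theorem Spans.exists_isSpanningTree_subset [Nonempty G.V] (h : G.Spans T) :
    ∃ T' ⊆ T, G.IsSpanningTree T' := by
  have hconn : (G.simpleGraph T).Connected := ⟨fun u v => reachable_simpleGraph ▸ h u v⟩
  obtain ⟨Tr, hle, hTr⟩ := hconn.exists_isTree_le
  have hsurj : Set.SurjOn (fun e => s((G.ends e).1, (G.ends e).2)) ↑T ↑Tr.edgeFinset := by
    intro s hs
    have := SimpleGraph.edgeSet_mono hle (SimpleGraph.mem_edgeFinset.1 hs)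
    rw [simpleGraph, SimpleGraph.edgeSet_fromEdgeSet] at this
    simpa using this.1
  obtain ⟨T', hsub, hinj, himg⟩ := exists_subset_injOn_image_eq_of_surjOn _ _ hsurj
  have hT' : G.simpleGraph T' = Tr := by
    rw [simpleGraph, himg, SimpleGraph.coe_edgeFinset, SimpleGraph.fromEdgeSet_edgeSet]
  refine ⟨T', by exact_mod_cast hsub, isSpanningTree_iff.2 ⟨fun u v => ?_, ?_⟩⟩
  · rw [← reachable_simpleGraph, hT']
    exact hTr.connected u v
  · rw [← card_image_of_injOn hinj, himg, Nat.card_eq_fintype_card, hTr.card_edgeFinset]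

theorem Spans.card_le [Nonempty G.V] (h : G.Spans T) : Nat.card G.V ≤ T.card + 1 := by
  obtain ⟨T', hsub, hT'⟩ := h.exists_isSpanningTree_subset
  have := card_le_card hsub
  have := (isSpanningTree_iff.1 hT').2
  omega

theorem Spans.t_pos [Nonempty G.V] (h : G.Spans univ) : 0 < G.t := by
  obtain ⟨T, -, hT⟩ := h.exists_isSpanningTree_subset
  have : Nonempty {T // G.IsSpanningTree T} := ⟨⟨T, hT⟩⟩
  exact Nat.card_pos

theorem Connected.spans_univ (h : G.Connected) : G.Spans univ := fun u v =>
  EqvGen.reflTransGen_le_eqvGen _ _ _ <|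
    ReflTransGen.mono (fun _ _ ⟨e, he⟩ => ⟨e, mem_univ e, he⟩) _ _ (h.2 u v)

noncomputable def spanningTrees (G : WMG) : Finset (Finset G.E) := univ.filter G.IsSpanningTree

theorem mem_spanningTrees : T ∈ G.spanningTrees ↔ G.IsSpanningTree T := by
  simp [spanningTrees]

theorem card_spanningTrees (G : WMG) : G.spanningTrees.card = G.t := by
  rw [t, Nat.card_eq_fintype_card, Fintype.card_subtype, spanningTrees]

theorem eqvGen_quot_mk_iff {r : G.V → G.V → Prop} {x y : G.V} :
    EqvGen ((G.quot r).Joins T) (Quot.mk r x) (Quot.mk r y) ↔ EqvGen (G.Joins T ⊔ r) x y := by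
  constructor
  · intro h
    let F : (G.quot r).V → Quot (EqvGen (G.Joins T ⊔ r)) :=
      Quot.lift (Quot.mk _) fun a b hab => Quot.sound (.rel _ _ (Or.inr hab))
    have hF : ∀ u v, (G.quot r).Joins T u v → F u = F v := by
      have hstep (e) (he : e ∈ T) : F (Quot.mk r (G.ends e).1) = F (Quot.mk r (G.ends e).2) :=
        Quot.sound (EqvGen.rel _ _ (Or.inl ⟨e, he, Or.inl rfl⟩))
      rintro _ _ ⟨e, he, h | h⟩ <;> obtain ⟨rfl, rfl⟩ := Prod.ext_iff.1 h
      exacts [hstep e he, (hstep e he).symm]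
    have := Quot.eqvGen_exact (congrArg (Quot.lift F hF) (Quot.eqvGen_sound h))
    exact (Equivalence.eqvGen_iff (EqvGen.is_equivalence _)).1 this
  · refine EqvGen.lift' (Quot.mk r) ?_
    rintro a b (⟨e, he, h⟩ | hab)
    · exact .rel _ _ ⟨e, he, by rcases h with h | h <;> simp [quot, h]⟩
    · rw [Quot.sound hab]
      exact .refl _

theorem spans_quot_iff {r : G.V → G.V → Prop} :
    (G.quot r).Spans T ↔ ∀ x y, EqvGen (G.Joins T ⊔ r) x y := by
  refine ⟨fun h x y => eqvGen_quot_mk_iff.1 (h _ _), fun h u v => ?_⟩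
  induction u using Quot.ind
  induction v using Quot.ind
  exact eqvGen_quot_mk_iff.2 (h _ _)

variable {p q : G.V}

theorem spans_iff_spans_ident2 :
    G.Spans T ↔ (G.ident2 p q).Spans T ∧ EqvGen (G.Joins T) p q := by
  unfold ident2
  rw [spans_quot_iff]
  refine ⟨fun h => ⟨fun x y => EqvGen.mono le_sup_left _ _ (h x y), h p q⟩,
    fun ⟨h, hpq⟩ x y => ?_⟩
  refine EqvGen.eqvGen_le (sup_le (fun a b => .rel a b) ?_) _ _ (h x y)
  rintro _ _ ⟨rfl, rfl⟩
  exact hpq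

noncomputable def ident2Equiv (hpq : p ≠ q) :
    (G.ident2 p q).V ≃ Option {v : G.V // v ≠ p ∧ v ≠ q} where
  toFun := Quot.lift (fun v => if h : v ≠ p ∧ v ≠ q then some ⟨v, h⟩ else none) <| by
    rintro _ _ ⟨rfl, rfl⟩
    simp
  invFun
    | none => Quot.mk _ p
    | some v => Quot.mk _ v.1
  left_inv := by
    refine Quot.ind fun v => ?_
    by_cases h : v ≠ p ∧ v ≠ q
    · simp only [dif_pos h]
      rfl
    · simp only [dif_neg h]
      rcases not_and_or.1 h with h | h <;> rw [not_not] at h <;> subst h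
      · rfl
      · exact Quot.sound ⟨rfl, rfl⟩
  right_inv := by
    rintro (_ | ⟨v, hv⟩)
    · simp [hpq]
    · simp [hv]

theorem card_ident2_add_one (hpq : p ≠ q) : Nat.card (G.ident2 p q).V + 1 = Nat.card G.V := by
  rw [Nat.card_congr (ident2Equiv hpq), Nat.card_eq_fintype_card, Nat.card_eq_fintype_card,
    Fintype.card_option, ← Fintype.card_ne_and_ne_add_two hpq]

theorem IsSpanningTree.not_isSpanningTree_ident2 (hpq : p ≠ q) (h : G.IsSpanningTree T) :
    ¬ (G.ident2 p q).IsSpanningTree T := by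
  have : Nonempty G.V := ⟨p⟩
  have : Nonempty (G.ident2 p q).V := ⟨Quot.mk _ p⟩
  intro h'
  have h₁ := (isSpanningTree_iff.1 h).2
  have h₂ : T.card + 1 = Nat.card (G.ident2 p q).V := (isSpanningTree_iff.1 h').2
  have := card_ident2_add_one hpq (G := G)
  omega

end

section

variable {k : ℕ} {G : Fin k → WMG} {p q : ∀ i, (G i).V} {S : ∀ i, Finset (G i).E}

theorem joins_sigmaGraph_iff {u v : (sigmaGraph G).V} :
    (sigmaGraph G).Joins (univ.sigma S) u v ↔
      ∃ i x y, (G i).Joins (S i) x y ∧ u = ⟨i, x⟩ ∧ v = ⟨i, y⟩ := by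
  constructor
  · rintro ⟨⟨i, e⟩, he, h | h⟩ <;> obtain ⟨rfl, rfl⟩ := Prod.ext_iff.1 h
    · exact ⟨i, _, _, ⟨e, (mem_sigma.1 he).2, Or.inl rfl⟩, rfl, rfl⟩
    · exact ⟨i, _, _, ⟨e, (mem_sigma.1 he).2, Or.inr rfl⟩, rfl, rfl⟩
  · rintro ⟨i, x, y, ⟨e, he, h⟩, rfl, rfl⟩
    exact ⟨⟨i, e⟩, mem_sigma.2 ⟨mem_univ i, he⟩, by rcases h with h | h <;> simp [sigmaGraph, h]⟩

variable (G p q) in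
def glueRel (x y : (sigmaGraph G).V) : Prop :=
  (∃ i j, x = ⟨i, p i⟩ ∧ y = ⟨j, p j⟩) ∨ (∃ i j, x = ⟨i, q i⟩ ∧ y = ⟨j, q j⟩)

def proj (p : ∀ i, (G i).V) (j : Fin k) (x : Σ i, (G i).V) : (G j).V :=
  if h : x.1 = j then h ▸ x.2 else p j

theorem proj_mk_self {j : Fin k} (v : (G j).V) : proj p j ⟨j, v⟩ = v := dif_pos rfl

theorem proj_mk_of_ne {i j : Fin k} (h : i ≠ j) (v : (G i).V) : proj p j ⟨i, v⟩ = p j :=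
  dif_neg h

theorem proj_mk_p (i j : Fin k) : proj p j ⟨i, p i⟩ = p j := by
  by_cases h : i = j
  · subst h
    exact proj_mk_self _
  · exact proj_mk_of_ne h _

theorem spans_ident2_of_spans_glueFam
    (hJ : ∀ x y, EqvGen ((sigmaGraph G).Joins (univ.sigma S) ⊔ glueRel G p q) x y) (j : Fin k) :
    ((G j).ident2 (p j) (q j)).Spans (S j) := by
  unfold ident2
  refine spans_quot_iff.2 fun x y => ?_
  have hq (i : Fin k) : EqvGen ((G j).Joins (S j) ⊔ fun x y => x = p j ∧ y = q j)
      (proj p j ⟨i, q i⟩) (q j) := by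
    by_cases h : i = j
    · subst h
      rw [proj_mk_self]
      exact .refl _
    · rw [proj_mk_of_ne h]
      exact .rel _ _ (Or.inr ⟨rfl, rfl⟩)
  have hstep : ∀ a b, ((sigmaGraph G).Joins (univ.sigma S) ⊔ glueRel G p q) a b →
      EqvGen ((G j).Joins (S j) ⊔ fun x y => x = p j ∧ y = q j) (proj p j a) (proj p j b) := by
    rintro _ _ (h | ⟨a, b, rfl, rfl⟩ | ⟨a, b, rfl, rfl⟩)
    · obtain ⟨i, x, y, hxy, rfl, rfl⟩ := joins_sigmaGraph_iff.1 h
      by_cases h : i = j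
      · subst h
        rw [proj_mk_self, proj_mk_self]
        exact .rel _ _ (Or.inl hxy)
      · rw [proj_mk_of_ne h, proj_mk_of_ne h]
        exact .refl _
    · rw [proj_mk_p, proj_mk_p]
      exact .refl _
    · exact (hq a).trans _ _ _ (hq b).symm
  simpa only [proj_mk_self] using (hJ ⟨j, x⟩ ⟨j, y⟩).lift' (proj p j) hstep

theorem exists_eqvGen_of_spans_glueFam
    (hJ : ∀ x y, EqvGen ((sigmaGraph G).Joins (univ.sigma S) ⊔ glueRel G p q) x y)
    (hk : 0 < k) : ∃ i, EqvGen ((G i).Joins (S i)) (p i) (q i) := by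
  by_contra! h
  -- invariant along the steps: false at every `p i`, true at every `q i`
  let Φ (x : Σ i, (G i).V) : Prop := EqvGen ((G x.1).Joins (S x.1)) x.2 (q x.1)
  have hΦ : ∀ x y, ((sigmaGraph G).Joins (univ.sigma S) ⊔ glueRel G p q) x y → Φ x = Φ y := by
    rintro _ _ (h' | ⟨a, b, rfl, rfl⟩ | ⟨a, b, rfl, rfl⟩)
    · obtain ⟨i, x, y, hxy, rfl, rfl⟩ := joins_sigmaGraph_iff.1 h'
      exact propext ⟨(EqvGen.rel x y hxy).symm.trans _ _ _, (EqvGen.rel x y hxy).trans _ _ _⟩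
    · exact (eq_false (h a)).trans (eq_false (h b)).symm
    · exact (eq_true (EqvGen.refl _)).trans (eq_true (EqvGen.refl _)).symm
  let i₀ : Fin k := ⟨0, hk⟩
  have : Φ ⟨i₀, p i₀⟩ = Φ ⟨i₀, q i₀⟩ :=
    congrArg (Quot.lift Φ hΦ) (Quot.eqvGen_sound (hJ ⟨i₀, p i₀⟩ ⟨i₀, q i₀⟩))
  exact h i₀ (this.mpr (EqvGen.refl _))

theorem spans_glueFam_iff (hk : 0 < k) :
    (glueFam G p q).Spans (univ.sigma S) ↔
      (∃ i, EqvGen ((G i).Joins (S i)) (p i) (q i)) ∧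
        ∀ j, ((G j).ident2 (p j) (q j)).Spans (S j) := by
  refine (spans_quot_iff (G := sigmaGraph G) (r := glueRel G p q)).trans
    ⟨fun hJ => ⟨exists_eqvGen_of_spans_glueFam hJ hk, spans_ident2_of_spans_glueFam hJ⟩,
      fun ⟨⟨i, hi⟩, hS⟩ => ?_⟩
  set R := (sigmaGraph G).Joins (univ.sigma S) ⊔ glueRel G p q
  have hlift (j : Fin k) {x y : (G j).V} (h : EqvGen ((G j).Joins (S j)) x y) :
      EqvGen R ⟨j, x⟩ ⟨j, y⟩ :=
    h.lift' (Sigma.mk j) fun a b hab =>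
      .rel _ _ (Or.inl (joins_sigmaGraph_iff.2 ⟨j, a, b, hab, rfl, rfl⟩))
  have hp (j : Fin k) : EqvGen R ⟨j, p j⟩ ⟨i, p i⟩ := .rel _ _ (Or.inr (Or.inl ⟨j, i, rfl, rfl⟩))
  have hq (j : Fin k) : EqvGen R ⟨j, q j⟩ ⟨i, q i⟩ := .rel _ _ (Or.inr (Or.inr ⟨j, i, rfl, rfl⟩))
  have hbase (j : Fin k) (v : (G j).V) : EqvGen R ⟨j, v⟩ ⟨i, p i⟩ := by
    unfold ident2 at hS
    refine (EqvGen.lift' (Sigma.mk j) ?_ (spans_quot_iff.1 (hS j) v (p j))).trans _ _ _ (hp j)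
    rintro a b (hab | ⟨rfl, rfl⟩)
    · exact hlift j (.rel _ _ hab)
    · exact (hp j).trans _ _ _ ((hlift i hi).trans _ _ _ (hq j).symm)
  rintro ⟨j, v⟩ ⟨j', v'⟩
  exact (hbase j v).trans _ _ _ (hbase j' v').symm

noncomputable def glueFamEquiv (i₀ : Fin k) (hpq : ∀ i, p i ≠ q i) :
    (glueFam G p q).V ≃ Option (Option (Σ i, {v : (G i).V // v ≠ p i ∧ v ≠ q i})) where
  toFun := Quot.lift (fun x => if h : x.2 ≠ p x.1 ∧ x.2 ≠ q x.1 then some (some ⟨x.1, x.2, h⟩)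
      else if x.2 = p x.1 then none else some none) <| by
    rintro _ _ (⟨i, j, rfl, rfl⟩ | ⟨i, j, rfl, rfl⟩)
    · simp
    · simp [Ne.symm (hpq i), Ne.symm (hpq j)]
  invFun
    | none => Quot.mk _ ⟨i₀, p i₀⟩
    | some none => Quot.mk _ ⟨i₀, q i₀⟩
    | some (some x) => Quot.mk _ ⟨x.1, x.2.1⟩
  left_inv := by
    refine Quot.ind fun ⟨i, v⟩ => ?_
    by_cases h : v ≠ p i ∧ v ≠ q i
    · simp only [dif_pos h]
      rfl
    · simp only [dif_neg h]
      rcases not_and_or.1 h with h | h <;> rw [not_not] at h <;> subst h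
      · simp only [if_pos]
        exact Quot.sound (Or.inl ⟨i₀, i, rfl, rfl⟩)
      · simp only [if_neg (Ne.symm (hpq i))]
        exact Quot.sound (Or.inr ⟨i₀, i, rfl, rfl⟩)
  right_inv := by
    rintro (_ | _ | ⟨i, v, hv⟩)
    · simp
    · simp [Ne.symm (hpq i₀)]
    · simp [hv]

theorem card_glueFam_add (hk : 0 < k) (hpq : ∀ i, p i ≠ q i) :
    Nat.card (glueFam G p q).V + 2 * k = ∑ i, Nat.card (G i).V + 2 := by
  have hpiece (i : Fin k) := Fintype.card_ne_and_ne_add_two (hpq i)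
  simp only [Nat.card_congr (glueFamEquiv ⟨0, hk⟩ hpq), Nat.card_eq_fintype_card,
    Fintype.card_option, Fintype.card_sigma, ← hpiece, sum_add_distrib, sum_const, card_univ,
    Fintype.card_fin, smul_eq_mul]
  ring

theorem card_sigma_add_one_eq_card_glueFam_iff (hk : 0 < k) (hpq : ∀ i, p i ≠ q i) (i : Fin k) :
    (univ.sigma S).card + 1 = Nat.card (glueFam G p q).V ↔
      ∑ j, (Nat.card (G j).V + if j = i then 1 else 0) = ∑ j, ((S j).card + 2) := by
  have := card_glueFam_add hk hpq (G := G)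
  simp only [card_sigma, sum_add_distrib, sum_ite_eq', mem_univ, if_true, sum_const,
    card_univ, Fintype.card_fin, smul_eq_mul]
  omega

theorem IsSpanningTree.exists_of_glueFam (hk : 0 < k) (hpq : ∀ i, p i ≠ q i)
    (h : (glueFam G p q).IsSpanningTree (univ.sigma S)) :
    ∃ i, (G i).IsSpanningTree (S i) ∧ ∀ j ≠ i, ((G j).ident2 (p j) (q j)).IsSpanningTree (S j) := by
  have : Nonempty (glueFam G p q).V := ⟨Quot.mk _ ⟨⟨0, hk⟩, p _⟩⟩
  have (j : Fin k) : Nonempty (G j).V := ⟨p j⟩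
  have (j : Fin k) : Nonempty ((G j).ident2 (p j) (q j)).V := ⟨Quot.mk _ (p j)⟩
  obtain ⟨hT, hcard⟩ := isSpanningTree_iff.1 h
  obtain ⟨⟨i, hi⟩, hS⟩ := (spans_glueFam_iff hk).1 hT
  have hSi : (G i).Spans (S i) := spans_iff_spans_ident2.2 ⟨hS i, hi⟩
  have hle : ∀ j ∈ univ, Nat.card (G j).V + (if j = i then 1 else 0) ≤ (S j).card + 2 := by
    intro j _
    split_ifs with h
    · subst h
      have := hSi.card_le
      omega
    · have : Nat.card ((G j).ident2 (p j) (q j)).V ≤ (S j).card + 1 := (hS j).card_le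
      have := card_ident2_add_one (hpq j)
      omega
  have heq := (sum_eq_sum_iff_of_le hle).1
    ((card_sigma_add_one_eq_card_glueFam_iff hk hpq i).1 hcard)
  refine ⟨i, isSpanningTree_iff.2 ⟨hSi, ?_⟩, fun j hj => isSpanningTree_iff.2 ⟨hS j, ?_⟩⟩
  · have := heq i (mem_univ i)
    simp only [if_pos] at this
    omega
  · have h₁ := heq j (mem_univ j)
    rw [if_neg hj] at h₁
    have := card_ident2_add_one (hpq j)
    show (S j).card + 1 = _
    omega

theorem isSpanningTree_glueFam (hk : 0 < k) (hpq : ∀ i, p i ≠ q i) {i : Fin k}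
    (hi : (G i).IsSpanningTree (S i))
    (hj : ∀ j ≠ i, ((G j).ident2 (p j) (q j)).IsSpanningTree (S j)) :
    (glueFam G p q).IsSpanningTree (univ.sigma S) := by
  have : Nonempty (glueFam G p q).V := ⟨Quot.mk _ ⟨⟨0, hk⟩, p _⟩⟩
  have : Nonempty (G i).V := ⟨p i⟩
  have (j : Fin k) : Nonempty ((G j).ident2 (p j) (q j)).V := ⟨Quot.mk _ (p j)⟩
  obtain ⟨hSi, hci⟩ := isSpanningTree_iff.1 hi
  have hj' (j : Fin k) (h : j ≠ i) := isSpanningTree_iff.1 (hj j h)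
  refine isSpanningTree_iff.2 ⟨(spans_glueFam_iff hk).2 ⟨⟨i, (spans_iff_spans_ident2.1 hSi).2⟩,
    fun j => ?_⟩, (card_sigma_add_one_eq_card_glueFam_iff hk hpq i).2 (sum_congr rfl fun j _ => ?_)⟩
  · by_cases h : j = i
    · subst h
      exact (spans_iff_spans_ident2.1 hSi).1
    · exact (hj' j h).1
  · split_ifs with h
    · subst h
      omega
    · have : (S j).card + 1 = Nat.card ((G j).ident2 (p j) (q j)).V := (hj' j h).2
      have := card_ident2_add_one (hpq j)
      omega

variable (G p q) in
noncomputable def pieceTreeChoices (i j : Fin k) : Finset (Finset (G j).E) :=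
  if j = i then (G j).spanningTrees else ((G j).ident2 (p j) (q j)).spanningTrees

theorem pieceTreeChoices_self (i : Fin k) : pieceTreeChoices G p q i i = (G i).spanningTrees :=
  if_pos rfl

theorem pieceTreeChoices_of_ne {i j : Fin k} (h : j ≠ i) :
    pieceTreeChoices G p q i j = ((G j).ident2 (p j) (q j)).spanningTrees :=
  if_neg h

variable (G p q) in
noncomputable def pieceTrees (i : Fin k) : Finset (∀ j, Finset (G j).E) :=
  Fintype.piFinset (pieceTreeChoices G p q i)

theorem mem_pieceTrees {i : Fin k} :
    S ∈ pieceTrees G p q i ↔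
      (G i).IsSpanningTree (S i) ∧ ∀ j ≠ i, ((G j).ident2 (p j) (q j)).IsSpanningTree (S j) := by
  rw [pieceTrees, Fintype.mem_piFinset]
  constructor
  · intro h
    refine ⟨mem_spanningTrees.1 (pieceTreeChoices_self i ▸ h i), fun j hj => ?_⟩
    exact mem_spanningTrees.1 (pieceTreeChoices_of_ne hj ▸ h j)
  · rintro ⟨hi, hj⟩ j
    by_cases h : j = i
    · subst h
      exact pieceTreeChoices_self j ▸ mem_spanningTrees.2 hi
    · rw [pieceTreeChoices_of_ne h]
      exact mem_spanningTrees.2 (hj j h)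

theorem card_pieceTrees (i : Fin k) :
    (pieceTrees G p q i).card = (G i).t * ∏ j ∈ univ.erase i, ((G j).ident2 (p j) (q j)).t := by
  rw [pieceTrees, Fintype.card_piFinset, ← mul_prod_erase _ _ (mem_univ i),
    pieceTreeChoices_self, card_spanningTrees]
  refine congrArg _ (prod_congr rfl fun j hj => ?_)
  rw [pieceTreeChoices_of_ne (ne_of_mem_erase hj)]
  exact card_spanningTrees _

theorem pairwiseDisjoint_pieceTrees (hpq : ∀ i, p i ≠ q i) :
    ((univ : Finset (Fin k)) : Set (Fin k)).PairwiseDisjoint (pieceTrees G p q) := by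
  intro i _ i' _ hii'
  refine disjoint_left.2 fun S hS hS' => ?_
  exact (mem_pieceTrees.1 hS).1.not_isSpanningTree_ident2 (hpq i) ((mem_pieceTrees.1 hS').2 i hii')

theorem t_glueFam (hk : 0 < k) (hpq : ∀ i, p i ≠ q i) :
    (glueFam G p q).t = ∑ i, (G i).t * ∏ j ∈ univ.erase i, ((G j).ident2 (p j) (q j)).t := by
  have hfilter : univ.filter (fun S : ∀ j, Finset (G j).E =>
      (glueFam G p q).IsSpanningTree (univ.sigma S)) = univ.biUnion (pieceTrees G p q) := by
    ext S
    simp only [mem_filter, mem_univ, true_and, mem_biUnion, mem_pieceTrees]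
    exact ⟨IsSpanningTree.exists_of_glueFam hk hpq,
      fun ⟨_, hi, hj⟩ => isSpanningTree_glueFam hk hpq hi hj⟩
  calc (glueFam G p q).t
      = Nat.card {S : ∀ j, Finset (G j).E // (glueFam G p q).IsSpanningTree (univ.sigma S)} :=
        Nat.card_congr ((Finset.sigmaEquivPi _).symm.subtypeEquiv fun _ => Iff.rfl).symm
    _ = _ := by
        rw [Nat.card_eq_fintype_card, Fintype.card_subtype, hfilter,
          card_biUnion (pairwiseDisjoint_pieceTrees hpq)]
        exact sum_congr rfl fun i _ => card_pieceTrees i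

end

end WMG

/-- If the connected multigraph `G` is the union of `k` connected subgraphs
`G_i`, pairwise sharing exactly two vertices `p, q` (and no edges), then
`t(G) = (∏_j t(G_{j,pq})) ∑_i t(G_i)/t(G_{i,pq})`.  In particular, if all
`G_i` are copies of the same graph `G₀` glued along the same two vertices,
then `t(G) = k ⬝ t(G₀) ⬝ t(G₀,_{pq})^{k-1}`. -/
theorem spanning_trees_of_banana_union :
    (∀ (k : ℕ), 1 ≤ k → ∀ (G : Fin k → WMG) (p q : ∀ i, (G i).V),
      (∀ i, (G i).Connected) → (∀ i, p i ≠ q i) →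
      ((WMG.glueFam G p q).t : ℝ) =
        (∏ j, (((G j).ident2 (p j) (q j)).t : ℝ)) *
          ∑ i, ((G i).t : ℝ) / (((G i).ident2 (p i) (q i)).t : ℝ)) ∧
    (∀ (k : ℕ), 1 ≤ k → ∀ (G₀ : WMG) (p₀ q₀ : G₀.V),
      G₀.Connected → p₀ ≠ q₀ →
      (WMG.glueFam (fun _ : Fin k => G₀) (fun _ => p₀) (fun _ => q₀)).t =
        k * G₀.t * (G₀.ident2 p₀ q₀).t ^ (k - 1)) := by
  refine ⟨fun k hk G p q hconn hpq => ?_, fun k hk G₀ p₀ q₀ _ hpq => ?_⟩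
  · have ht (i : Fin k) : (((G i).ident2 (p i) (q i)).t : ℝ) ≠ 0 := by
      have : Nonempty ((G i).ident2 (p i) (q i)).V := ⟨Quot.mk _ (p i)⟩
      exact_mod_cast (WMG.spans_iff_spans_ident2.1 (hconn i).spans_univ).1.t_pos.ne'
    rw [WMG.t_glueFam hk hpq, mul_sum]
    push_cast
    refine sum_congr rfl fun i _ => ?_
    rw [← mul_prod_erase _ _ (mem_univ i)]
    field_simp [ht i]
  · rw [WMG.t_glueFam hk fun _ => hpq]
    simp only [prod_const, mem_univ, card_erase_of_mem, card_univ, Fintype.card_fin, sum_const,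
      smul_eq_mul]
    ring
end
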